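/- arXiv:1510.05081 — 6 statements merged into one kernel-verified Lean document; each statement's English description precedes it below -/
import Mathlib

section
/- Let Ω ⊂ ℝ² be an open set and u ∈ BV(Ω). If the total variation equals the variation in the second coordinate direction, i.e. ∫_Ω |Du| = ∫_Ω |D₂u|, then the variation in the first coordinate direction vanishes: ∫_Ω |D₁u| = 0. -/
noncomputable section
open MeasureTheory Filter Set Topology

/-- The set of test values for the variation of `u` in direction `e` on `Ω`:
numbers `∫_Ω u ∂_e ξ` for scalar test functions `ξ ∈ C¹_c(Ω)` with `|ξ| ≤ 1`. -/
def dirVarSet (Ω : Set (ℝ × ℝ)) (u : ℝ × ℝ → ℝ) (e : ℝ × ℝ) : Set ℝ :=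
  {v | ∃ ξ : ℝ × ℝ → ℝ, ContDiff ℝ 1 ξ ∧ HasCompactSupport ξ ∧ tsupport ξ ⊆ Ω ∧
      (∀ x, |ξ x| ≤ 1) ∧ v = ∫ x in Ω, u x * fderiv ℝ ξ x e}

/-- The variation `∫_Ω |D_e u|` of `u` in direction `e`. -/
def dirVar (Ω : Set (ℝ × ℝ)) (u : ℝ × ℝ → ℝ) (e : ℝ × ℝ) : ℝ :=
  sSup (dirVarSet Ω u e)

/-- Test values for the total variation of `u` on `Ω`: numbers `∫_Ω u div ξ` for
vector fields `ξ ∈ C¹_c(Ω, ℝ²)` with (Euclidean) `|ξ| ≤ 1`. -/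
def varSet (Ω : Set (ℝ × ℝ)) (u : ℝ × ℝ → ℝ) : Set ℝ :=
  {v | ∃ ξ : ℝ × ℝ → ℝ × ℝ, ContDiff ℝ 1 ξ ∧ HasCompactSupport ξ ∧ tsupport ξ ⊆ Ω ∧
      (∀ x, (ξ x).1 ^ 2 + (ξ x).2 ^ 2 ≤ 1) ∧
      v = ∫ x in Ω, (u x * (fderiv ℝ ξ x (1, 0)).1 + u x * (fderiv ℝ ξ x (0, 1)).2)}

/-- The total variation `∫_Ω |Du|`. -/
def totalVar (Ω : Set (ℝ × ℝ)) (u : ℝ × ℝ → ℝ) : ℝ := sSup (varSet Ω u)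

/-- `u` is of bounded variation on `Ω`. -/
def IsBVOn (Ω : Set (ℝ × ℝ)) (u : ℝ × ℝ → ℝ) : Prop :=
  IntegrableOn u Ω volume ∧ BddAbove (varSet Ω u)

/-- The open unit square `Q = (0,1)²`. -/
def unitSquare : Set (ℝ × ℝ) := Ioo (0 : ℝ) 1 ×ˢ Ioo (0 : ℝ) 1

/-! If `ξ₁`, `ξ₂` are test functions for `∂₁` and `∂₂` and `t² + s² ≤ 1`, then `(t ξ₁, s ξ₂)` is a
test field for the divergence, so `t v₁ + s v₂ ≤ ∫ |Du|` for the corresponding test values.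
Taking the supremum over `v₂` and then the optimal `(t, s)` gives
`√(v₁² + (∫ |D₂u|)²) ≤ ∫ |Du|`; hence `∫ |Du| = ∫ |D₂u|` forces every test value `v₁` of
`∫ |D₁u|` to vanish. -/

lemma integrableOn_mul_fderiv_apply {E : Type*} [NormedAddCommGroup E] [NormedSpace ℝ E]
    [MeasurableSpace E] [OpensMeasurableSpace E] {μ : Measure E} {Ω : Set E} {u ξ : E → ℝ}
    (hu : IntegrableOn u Ω μ) (hξ : ContDiff ℝ 1 ξ) (hξs : HasCompactSupport ξ) (e : E) :
    IntegrableOn (fun x => u x * fderiv ℝ ξ x e) Ω μ := by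
  have hD : Continuous fun x => fderiv ℝ ξ x e :=
    (hξ.continuous_fderiv one_ne_zero).clm_apply continuous_const
  have hDs : HasCompactSupport fun x => fderiv ℝ ξ x e :=
    (hξs.fderiv ℝ).comp_left (g := fun L : E →L[ℝ] ℝ => L e) rfl
  obtain ⟨C, hC⟩ := hD.bounded_above_of_compact_support hDs
  exact hu.mul_bdd hD.aestronglyMeasurable.restrict (Eventually.of_forall hC)

lemma zero_mem_dirVarSet (Ω : Set (ℝ × ℝ)) (u : ℝ × ℝ → ℝ) (e : ℝ × ℝ) :
    (0 : ℝ) ∈ dirVarSet Ω u e :=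
  ⟨0, contDiff_const, HasCompactSupport.zero, by simp, by simp, by simp⟩

lemma mul_add_mul_mem_varSet {Ω : Set (ℝ × ℝ)} {u : ℝ × ℝ → ℝ} (hu : IntegrableOn u Ω)
    {v₁ v₂ t s : ℝ} (h₁ : v₁ ∈ dirVarSet Ω u (1, 0)) (h₂ : v₂ ∈ dirVarSet Ω u (0, 1))
    (hts : t ^ 2 + s ^ 2 ≤ 1) : t * v₁ + s * v₂ ∈ varSet Ω u := by
  obtain ⟨ξ₁, hc₁, hs₁, hΩ₁, hb₁, rfl⟩ := h₁
  obtain ⟨ξ₂, hc₂, hs₂, hΩ₂, hb₂, rfl⟩ := h₂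
  let op : ℝ → ℝ → ℝ × ℝ := fun a b => (t * a, s * b)
  have hop : op 0 0 = 0 := by simp [op]
  refine ⟨fun x => op (ξ₁ x) (ξ₂ x), (contDiff_const.mul hc₁).prodMk (contDiff_const.mul hc₂),
    hs₁.comp₂_left hs₂ hop,
    (tsupport_binop_subset op hop ξ₁ ξ₂).trans (union_subset hΩ₁ hΩ₂), fun x => ?_, ?_⟩
  · have h₁ : ξ₁ x ^ 2 ≤ 1 := (sq_le_one_iff_abs_le_one _).mpr (hb₁ x)
    have h₂ : ξ₂ x ^ 2 ≤ 1 := (sq_le_one_iff_abs_le_one _).mpr (hb₂ x)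
    simp only [op, mul_pow]
    nlinarith [sq_nonneg t, sq_nonneg s]
  · have hfd (x : ℝ × ℝ) : fderiv ℝ (fun x => op (ξ₁ x) (ξ₂ x)) x =
        (t • fderiv ℝ ξ₁ x).prod (s • fderiv ℝ ξ₂ x) :=
      (((hc₁.differentiable one_ne_zero x).hasFDerivAt.const_mul t).prodMk
        ((hc₂.differentiable one_ne_zero x).hasFDerivAt.const_mul s)).fderiv
    simp only [hfd, ContinuousLinearMap.prod_apply, smul_apply, smul_eq_mul,
      mul_left_comm (u _)]
    rw [integral_add ((integrableOn_mul_fderiv_apply hu hc₁ hs₁ _).const_mul t)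
        ((integrableOn_mul_fderiv_apply hu hc₂ hs₂ _).const_mul s),
      integral_const_mul, integral_const_mul]

lemma sqrt_sq_add_sq_le_of_mul_add_mul_le {a b c : ℝ} (hb : 0 ≤ b)
    (h : ∀ t s : ℝ, 0 ≤ s → t ^ 2 + s ^ 2 ≤ 1 → t * a + s * b ≤ c) : √(a ^ 2 + b ^ 2) ≤ c := by
  set r := √(a ^ 2 + b ^ 2)
  have hr : r ^ 2 = a ^ 2 + b ^ 2 := Real.sq_sqrt (by positivity)
  rcases (show 0 ≤ r from Real.sqrt_nonneg _).eq_or_lt with hr0 | hr0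
  · simpa [← hr0] using h 0 0 le_rfl (by norm_num)
  have hr_ne : r ≠ 0 := hr0.ne'
  -- the maximiser of `t a + s b` over the unit disc is `(a, b) / r`
  have hunit : (a / r) ^ 2 + (b / r) ^ 2 = 1 := by
    field_simp
    exact hr.symm
  have hval : a / r * a + b / r * b = r := by
    field_simp
    linear_combination -hr
  simpa [hval] using h (a / r) (b / r) (by positivity) hunit.le

lemma dirVarSet_snd_subset_varSet {Ω : Set (ℝ × ℝ)} {u : ℝ × ℝ → ℝ} (hu : IntegrableOn u Ω) :
    dirVarSet Ω u (0, 1) ⊆ varSet Ω u := fun v hv => by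
  simpa using mul_add_mul_mem_varSet hu (zero_mem_dirVarSet Ω u _) hv (t := 0) (s := 1)
    (by norm_num)

lemma dirVar_snd_nonneg {Ω : Set (ℝ × ℝ)} {u : ℝ × ℝ → ℝ} (hu : IsBVOn Ω u) :
    0 ≤ dirVar Ω u (0, 1) :=
  le_csSup (hu.2.mono (dirVarSet_snd_subset_varSet hu.1)) (zero_mem_dirVarSet Ω u _)

open Pointwise in
lemma mul_add_mul_dirVar_le_totalVar {Ω : Set (ℝ × ℝ)} {u : ℝ × ℝ → ℝ} (hu : IsBVOn Ω u)
    {v₁ t s : ℝ} (hv₁ : v₁ ∈ dirVarSet Ω u (1, 0)) (hs : 0 ≤ s) (hts : t ^ 2 + s ^ 2 ≤ 1) :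
    t * v₁ + s * dirVar Ω u (0, 1) ≤ totalVar Ω u := by
  have hsSup : s * dirVar Ω u (0, 1) = sSup (s • dirVarSet Ω u (0, 1)) :=
    (Real.sSup_smul_of_nonneg hs _).symm
  suffices sSup (s • dirVarSet Ω u (0, 1)) ≤ totalVar Ω u - t * v₁ by linarith
  refine csSup_le ⟨_, smul_mem_smul_set (zero_mem_dirVarSet Ω u _)⟩ ?_
  rintro _ ⟨v₂, hv₂, rfl⟩
  have : t * v₁ + s * v₂ ≤ totalVar Ω u := le_csSup hu.2 (mul_add_mul_mem_varSet hu.1 hv₁ hv₂ hts)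
  change s * v₂ ≤ _
  linarith

lemma sqrt_sq_add_sq_dirVar_le_totalVar {Ω : Set (ℝ × ℝ)} {u : ℝ × ℝ → ℝ} (hu : IsBVOn Ω u)
    {v₁ : ℝ} (hv₁ : v₁ ∈ dirVarSet Ω u (1, 0)) :
    √(v₁ ^ 2 + dirVar Ω u (0, 1) ^ 2) ≤ totalVar Ω u :=
  sqrt_sq_add_sq_le_of_mul_add_mul_le (dirVar_snd_nonneg hu) fun _ _ hs hts =>
    mul_add_mul_dirVar_le_totalVar hu hv₁ hs hts

theorem stmt1_general (Ω : Set (ℝ × ℝ)) (u : ℝ × ℝ → ℝ)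
    (hu : IsBVOn Ω u)
    (heq : totalVar Ω u = dirVar Ω u (0, 1)) :
    dirVar Ω u (1, 0) = 0 := by
  have hD₁ : dirVarSet Ω u (1, 0) = {0} := by
    refine eq_singleton_iff_unique_mem.2 ⟨zero_mem_dirVarSet Ω u _, fun v₁ hv₁ => ?_⟩
    have h := sqrt_sq_add_sq_dirVar_le_totalVar hu hv₁
    rw [heq, Real.sqrt_le_iff] at h
    nlinarith [h.2]
  rw [dirVar, hD₁, csSup_singleton]

/-- if `u ∈ BV(Ω)` on a planar open set `Ω` and the total variation equals
the variation in the second coordinate direction, then the variation in the first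
coordinate direction vanishes. -/
theorem stmt1 (Ω : Set (ℝ × ℝ)) (hΩ : IsOpen Ω) (u : ℝ × ℝ → ℝ)
    (hu : IsBVOn Ω u)
    (heq : totalVar Ω u = dirVar Ω u (0, 1)) :
    dirVar Ω u (1, 0) = 0 :=
  stmt1_general Ω u hu heq
end
end

section
/- Let 0 < η < 1 and f ∈ C²([0,η], ℝ₊). Let A = (a, f(a)) and B = (b, f(b)) with 0 ≤ a < b ≤ η be points on the graph C_f of f, let 𝒞 = [AB] be the chord, and let arc(AB) be the arc of C_f between A and B. Then ℋ¹(𝒞) ≤ ℋ¹(arc(AB)) ≤ ℋ¹(𝒞)·(1 + (b−a)‖f''‖_∞(2‖f'‖_∞ + ‖f''‖_∞(b−a))). -/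
/-!
Viewing the graph as the complex curve `γ x = x + f x * I`, the chord is `‖∫ γ'‖` and the arc is
`∫ ‖γ'‖`, which gives the lower bound. For the upper bound, the mean value theorem gives a point `c`
where `f'(c)` is the slope of the chord, so the chord has length `(b - a) √(1 + f'(c)²)`; since
`√(1 + s²)` moves by at most `|s² - t²| / 2` and `|f'(x)² - f'(c)²| ≤ 2‖f'‖_∞ ‖f''‖_∞ (b - a)`,
the arc exceeds the chord by at most `‖f'‖_∞ ‖f''‖_∞ (b - a)²`.
-/

open Set MeasureTheory intervalIntegral

open Complex in
theorem sqrt_sq_add_sq_le_integral_sqrt_one_add_sq {f f' : ℝ → ℝ} {a b : ℝ} (hab : a ≤ b)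
    (hf : ∀ x ∈ uIcc a b, HasDerivAt f (f' x) x) (hf' : IntervalIntegrable f' volume a b) :
    √((b - a) ^ 2 + (f b - f a) ^ 2) ≤ ∫ x in a..b, √(1 + f' x ^ 2) := by
  have hγ : ∀ x ∈ uIcc a b,
      HasDerivAt (fun x : ℝ => (x : ℂ) + f x * I) (((1 : ℝ) : ℂ) + f' x * I) x := fun x hx =>
    (hasDerivAt_id x).ofReal_comp.add ((hf x hx).ofReal_comp.mul_const I)
  have hγ' : IntervalIntegrable (fun x => ((1 : ℝ) : ℂ) + f' x * I) volume a b :=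
    intervalIntegrable_const.add
      (IntervalIntegrable.mul_const ⟨hf'.1.ofReal, hf'.2.ofReal⟩ I)
  calc √((b - a) ^ 2 + (f b - f a) ^ 2)
      = ‖∫ x in a..b, ((1 : ℝ) : ℂ) + f' x * I‖ := by
        rw [integral_eq_sub_of_hasDerivAt hγ hγ', ← norm_add_mul_I]
        push_cast; ring_nf
    _ ≤ ∫ x in a..b, ‖((1 : ℝ) : ℂ) + f' x * I‖ := norm_integral_le_integral_norm hab
    _ = ∫ x in a..b, √(1 + f' x ^ 2) := by simp only [norm_add_mul_I, one_pow]

theorem sqrt_one_add_sq_le_add (s t : ℝ) : √(1 + s ^ 2) ≤ √(1 + t ^ 2) + |s ^ 2 - t ^ 2| / 2 := by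
  have hA : 1 ≤ √(1 + t ^ 2) := Real.le_sqrt_of_sq_le (by nlinarith [sq_nonneg t])
  have hA2 : √(1 + t ^ 2) ^ 2 = 1 + t ^ 2 := Real.sq_sqrt (by positivity)
  have hd : s ^ 2 - t ^ 2 ≤ |s ^ 2 - t ^ 2| := le_abs_self _
  rw [Real.sqrt_le_iff]
  constructor
  · positivity
  · nlinarith [abs_nonneg (s ^ 2 - t ^ 2)]

theorem sqrt_sq_add_sq_eq_mul_sqrt {p : ℝ} (hp : 0 < p) (q : ℝ) :
    √(p ^ 2 + q ^ 2) = p * √(1 + (q / p) ^ 2) := by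
  rw [← Real.sqrt_sq hp.le, ← Real.sqrt_mul (sq_nonneg p), Real.sqrt_sq hp.le]
  congr 1
  field_simp

theorem integral_sqrt_one_add_sq_deriv_le {f : ℝ → ℝ} {a b M₁ M₂ : ℝ} (hab : a < b)
    (hf : Differentiable ℝ f) (hf' : Differentiable ℝ (deriv f))
    (hM₁ : ∀ x ∈ Icc a b, |deriv f x| ≤ M₁) (hM₂ : ∀ x ∈ Icc a b, |deriv (deriv f) x| ≤ M₂) :
    ∫ x in a..b, √(1 + deriv f x ^ 2) ≤
      √((b - a) ^ 2 + (f b - f a) ^ 2) + M₁ * M₂ * (b - a) ^ 2 := by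
  obtain ⟨c, hc, hslope⟩ := exists_deriv_eq_slope f hab hf.continuous.continuousOn
    hf.differentiableOn
  have hc' : c ∈ Icc a b := Ioo_subset_Icc_self hc
  have hpoint : ∀ x ∈ Icc a b,
      √(1 + deriv f x ^ 2) ≤ √(1 + deriv f c ^ 2) + M₁ * M₂ * (b - a) := by
    intro x hx
    have hsum : |deriv f x + deriv f c| ≤ 2 * M₁ := by
      linarith [abs_add_le (deriv f x) (deriv f c), hM₁ x hx, hM₁ c hc']
    have hdiff : |deriv f x - deriv f c| ≤ M₂ * (b - a) := by
      have hLip := (convex_Icc a b).norm_image_sub_le_of_norm_deriv_le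
        (fun z _ => hf' z) hM₂ hc' hx
      have hxc : |x - c| ≤ b - a :=
        abs_sub_le_iff.2 ⟨by linarith [hx.2, hc'.1], by linarith [hx.1, hc'.2]⟩
      have hM₂0 : 0 ≤ M₂ := (abs_nonneg _).trans (hM₂ x hx)
      simp only [Real.norm_eq_abs] at hLip
      exact hLip.trans (mul_le_mul_of_nonneg_left hxc hM₂0)
    have hsq : |deriv f x ^ 2 - deriv f c ^ 2| ≤ 2 * M₁ * (M₂ * (b - a)) := by
      rw [sq_sub_sq, abs_mul]
      exact mul_le_mul hsum hdiff (abs_nonneg _)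
        (by linarith [abs_nonneg (deriv f x + deriv f c)])
    linarith [sqrt_one_add_sq_le_add (deriv f x) (deriv f c)]
  have hint : IntervalIntegrable (fun x => √(1 + deriv f x ^ 2)) volume a b :=
    (continuous_const.add (hf'.continuous.pow 2)).sqrt.intervalIntegrable a b
  calc ∫ x in a..b, √(1 + deriv f x ^ 2)
      ≤ ∫ _ in a..b, √(1 + deriv f c ^ 2) + M₁ * M₂ * (b - a) :=
        integral_mono_on hab.le hint intervalIntegrable_const hpoint
    _ = √((b - a) ^ 2 + (f b - f a) ^ 2) + M₁ * M₂ * (b - a) ^ 2 := by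
        rw [intervalIntegral.integral_const, smul_eq_mul,
          sqrt_sq_add_sq_eq_mul_sqrt (sub_pos.2 hab), ← hslope]
        ring

theorem stmt6_general (η a b : ℝ) (f : ℝ → ℝ) (M1 M2 : ℝ)
    (hf : ContDiff ℝ 2 f)
    (ha : 0 ≤ a) (hab : a < b) (hb : b ≤ η)
    (hM1 : M1 = sSup ((fun x => |deriv f x|) '' Icc (0:ℝ) η))
    (hM2 : M2 = sSup ((fun x => |deriv (deriv f) x|) '' Icc (0:ℝ) η)) :
    Real.sqrt ((b - a) ^ 2 + (f b - f a) ^ 2) ≤ (∫ x in a..b, Real.sqrt (1 + deriv f x ^ 2)) ∧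
    (∫ x in a..b, Real.sqrt (1 + deriv f x ^ 2)) ≤
      Real.sqrt ((b - a) ^ 2 + (f b - f a) ^ 2) *
        (1 + (b - a) * M2 * (2 * M1 + M2 * (b - a))) := by
  have hf' : ContDiff ℝ 1 (deriv f) := hf.deriv'
  have hd : Differentiable ℝ f := hf.differentiable (by norm_num)
  have hd' : Differentiable ℝ (deriv f) := hf'.differentiable one_ne_zero
  have hsub : Icc a b ⊆ Icc 0 η := Icc_subset_Icc ha hb
  have hB1 : ∀ x ∈ Icc a b, |deriv f x| ≤ M1 := fun x hx =>
    hM1 ▸ hd'.continuous.abs.continuousOn.le_sSup_image_Icc (hsub hx)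
  have hB2 : ∀ x ∈ Icc a b, |deriv (deriv f) x| ≤ M2 := fun x hx =>
    hM2 ▸ (hf'.continuous_deriv le_rfl).abs.continuousOn.le_sSup_image_Icc (hsub hx)
  have haa : a ∈ Icc a b := left_mem_Icc.2 hab.le
  have hM1M2 : 0 ≤ M1 * M2 :=
    mul_nonneg ((abs_nonneg _).trans (hB1 a haa)) ((abs_nonneg _).trans (hB2 a haa))
  have hchord : b - a ≤ √((b - a) ^ 2 + (f b - f a) ^ 2) :=
    Real.le_sqrt_of_sq_le (le_add_of_nonneg_right (sq_nonneg _))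
  refine ⟨sqrt_sq_add_sq_le_integral_sqrt_one_add_sq hab.le
    (fun x _ => (hd x).hasDerivAt) (hd'.continuous.intervalIntegrable a b), ?_⟩
  refine (integral_sqrt_one_add_sq_deriv_le hab hd hd' hB1 hB2).trans ?_
  have hp : 0 ≤ b - a := (sub_pos.2 hab).le
  generalize √((b - a) ^ 2 + (f b - f a) ^ 2) = L at hchord ⊢
  generalize b - a = p at hchord hp ⊢
  nlinarith [mul_le_mul_of_nonneg_left hchord (mul_nonneg hM1M2 hp),
    mul_nonneg (mul_nonneg (hp.trans hchord) hp) (sq_nonneg M2)]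

/-- comparison between the length of a chord of the graph of a `C²`
function `f : [0,η] → ℝ₊` and the length of the corresponding arc:
`ℋ¹(𝒞) ≤ ℋ¹(arc(AB)) ≤ ℋ¹(𝒞)·(1 + (b−a)‖f''‖_∞(2‖f'‖_∞ + ‖f''‖_∞(b−a)))`. -/
theorem stmt6 (η a b : ℝ) (f : ℝ → ℝ) (M1 M2 : ℝ)
    (hη0 : 0 < η) (hη1 : η < 1)
    (hf : ContDiff ℝ 2 f) (hfpos : ∀ x ∈ Icc (0:ℝ) η, 0 ≤ f x)
    (ha : 0 ≤ a) (hab : a < b) (hb : b ≤ η)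
    (hM1 : M1 = sSup ((fun x => |deriv f x|) '' Icc (0:ℝ) η))
    (hM2 : M2 = sSup ((fun x => |deriv (deriv f) x|) '' Icc (0:ℝ) η)) :
    Real.sqrt ((b - a) ^ 2 + (f b - f a) ^ 2) ≤ (∫ x in a..b, Real.sqrt (1 + deriv f x ^ 2)) ∧
    (∫ x in a..b, Real.sqrt (1 + deriv f x ^ 2)) ≤
      Real.sqrt ((b - a) ^ 2 + (f b - f a) ^ 2) *
        (1 + (b - a) * M2 * (2 * M1 + M2 * (b - a))) :=
  stmt6_general η a b f M1 M2 hf ha hab hb hM1 hM2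
end

section
/- Let η > 0 and f ∈ C²([0,η],ℝ) with η < 1/(2‖f'‖_∞ ‖f''‖_∞). Fix 0 ≤ a < b ≤ η, and suppose a ≤ x < y ≤ b are such that the segment [(x,f(x)),(y,f(y))] is orthogonal to the chord [(a,f(a)),(b,f(b))]. Then no such x, y exist; equivalently, any line orthogonal to the chord [(a,f(a)),(b,f(b))] that intersects it meets the portion of the graph of f over [a,b] in at most one point. -/
open Set

/-! If the chord of `f` over `[x, y]` is orthogonal to the chord over `[a, b]`, the mean value
theorem yields points `c, d ∈ [a, b]` with `f'(c) f'(d) = -1`. The two slopes have opposite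
signs and each is at least `1 / ‖f'‖_∞` in absolute value, so `|f'(c) - f'(d)| ≥ 2 / ‖f'‖_∞`;
but `f'` is `‖f''‖_∞`-Lipschitz and `|c - d| ≤ η`, which gives `2 ≤ ‖f'‖_∞ ‖f''‖_∞ η < 1/2`. -/

theorem abs_le_sSup_image_abs {α : Type*} [TopologicalSpace α] {g : α → ℝ} {s : Set α}
    (hs : IsCompact s) (hg : ContinuousOn g s) {t : α} (ht : t ∈ s) :
    |g t| ≤ sSup ((fun x => |g x|) '' s) :=
  le_csSup (hs.bddAbove_image hg.abs) (mem_image_of_mem _ ht)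

theorem two_le_mul_abs_sub_of_mul_eq_neg_one {p q M : ℝ} (hpq : p * q = -1)
    (hp : |p| ≤ M) (hq : |q| ≤ M) : 2 ≤ M * |p - q| := by
  -- `p` and `q` have opposite signs, and `M |p| ≥ |q| |p| = 1`, `M |q| ≥ |p| |q| = 1`.
  rcases le_total 0 p with hp0 | hp0
  · have hq0 : q ≤ 0 := by nlinarith
    rw [abs_of_nonneg hp0] at hp
    rw [abs_of_nonpos hq0] at hq
    rw [abs_of_nonneg (by linarith)]
    nlinarith
  · have hq0 : 0 ≤ q := by nlinarith
    rw [abs_of_nonpos hp0] at hp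
    rw [abs_of_nonneg hq0] at hq
    rw [abs_of_nonpos (by linarith)]
    nlinarith

theorem exists_deriv_mul_deriv_eq_neg_one {f : ℝ → ℝ} (hf : Differentiable ℝ f)
    {x y a b : ℝ} (hxy : x < y) (hab : a < b)
    (horth : (y - x) * (b - a) + (f y - f x) * (f b - f a) = 0) :
    ∃ c ∈ Ioo x y, ∃ d ∈ Ioo a b, deriv f c * deriv f d = -1 := by
  obtain ⟨c, hc, hc_slope⟩ := exists_deriv_eq_slope f hxy hf.continuous.continuousOn
    hf.differentiableOn
  obtain ⟨d, hd, hd_slope⟩ := exists_deriv_eq_slope f hab hf.continuous.continuousOn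
    hf.differentiableOn
  refine ⟨c, hc, d, hd, ?_⟩
  have hyx : y - x ≠ 0 := sub_ne_zero.mpr hxy.ne'
  have hba : b - a ≠ 0 := sub_ne_zero.mpr hab.ne'
  rw [hc_slope, hd_slope, div_mul_div_comm, div_eq_iff (mul_ne_zero hyx hba)]
  linear_combination horth

theorem stmt8_general (η a b : ℝ) (f : ℝ → ℝ) (M1 M2 : ℝ)
    (hf : ContDiff ℝ 2 f)
    (hM1 : M1 = sSup ((fun x => |deriv f x|) '' Icc (0:ℝ) η))
    (hM2 : M2 = sSup ((fun x => |deriv (deriv f) x|) '' Icc (0:ℝ) η))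
    (hη : η < 1 / (2 * M1 * M2))
    (ha : 0 ≤ a) (hab : a < b) (hb : b ≤ η) :
    ¬ ∃ x y : ℝ, a ≤ x ∧ x < y ∧ y ≤ b ∧
      (y - x) * (b - a) + (f y - f x) * (f b - f a) = 0 := by
  rintro ⟨x, y, hax, hxy, hyb, horth⟩
  have hf' : ContDiff ℝ 1 (deriv f) := hf.deriv' (n := 1)
  obtain ⟨c, hc, d, hd, hcd⟩ :=
    exists_deriv_mul_deriv_eq_neg_one (hf.differentiable two_ne_zero) hxy hab horth
  have hcI : c ∈ Icc 0 η := ⟨by linarith [hc.1], by linarith [hc.2]⟩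
  have hdI : d ∈ Icc 0 η := ⟨by linarith [hd.1], by linarith [hd.2]⟩
  have hM1_bound : ∀ t ∈ Icc 0 η, |deriv f t| ≤ M1 := fun t ht =>
    hM1 ▸ abs_le_sSup_image_abs isCompact_Icc hf'.continuous.continuousOn ht
  have hM2_bound : ∀ t ∈ Icc 0 η, ‖deriv (deriv f) t‖ ≤ M2 := fun t ht =>
    hM2 ▸ abs_le_sSup_image_abs isCompact_Icc hf'.continuous_deriv_one.continuousOn ht
  have hslopes := two_le_mul_abs_sub_of_mul_eq_neg_one hcd (hM1_bound c hcI) (hM1_bound d hdI)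
  have hlip : |deriv f c - deriv f d| ≤ M2 * |c - d| :=
    (convex_Icc 0 η).norm_image_sub_le_of_norm_deriv_le
      (fun t _ => (hf'.differentiable one_ne_zero).differentiableAt) hM2_bound hdI hcI
  have hcd_dist : |c - d| ≤ η :=
    abs_sub_le_iff.mpr ⟨by linarith [hcI.2, hdI.1], by linarith [hcI.1, hdI.2]⟩
  have hM1_nonneg : 0 ≤ M1 := (abs_nonneg _).trans (hM1_bound c hcI)
  have hM2_nonneg : 0 ≤ M2 := (norm_nonneg _).trans (hM2_bound c hcI)
  have key : 2 ≤ M1 * M2 * η := calc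
    2 ≤ M1 * |deriv f c - deriv f d| := hslopes
    _ ≤ M1 * (M2 * η) := by gcongr; exact hlip.trans (by gcongr)
    _ = M1 * M2 * η := by ring
  have hpos : 0 < 2 * M1 * M2 := by nlinarith
  rw [lt_div_iff₀ hpos] at hη
  linarith

/-- if `η < 1/(2‖f'‖_∞‖f''‖_∞)`, then for `0 ≤ a < b ≤ η` there are no
points `a ≤ x < y ≤ b` such that the segment `[(x,f x),(y,f y)]` is orthogonal to the
chord `[(a,f a),(b,f b)]`; equivalently, any line orthogonal to the chord meets the
graph of `f` over `[a,b]` in at most one point. -/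
theorem stmt8 (η a b : ℝ) (f : ℝ → ℝ) (M1 M2 : ℝ)
    (hη0 : 0 < η)
    (hf : ContDiff ℝ 2 f)
    (hM1 : M1 = sSup ((fun x => |deriv f x|) '' Icc (0:ℝ) η))
    (hM2 : M2 = sSup ((fun x => |deriv (deriv f) x|) '' Icc (0:ℝ) η))
    (hη : η < 1 / (2 * M1 * M2))
    (ha : 0 ≤ a) (hab : a < b) (hb : b ≤ η) :
    ¬ ∃ x y : ℝ, a ≤ x ∧ x < y ∧ y ≤ b ∧
      (y - x) * (b - a) + (f y - f x) * (f b - f a) = 0 :=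
  stmt8_general η a b f M1 M2 hf hM1 hM2 hη ha hab hb
end

section
/- Let η > 0 and f ∈ C²([0,η],ℝ) with η < 1/(2‖f'‖_∞ ‖f''‖_∞). For 0 ≤ a < b ≤ η let 𝒞 = [(a,f(a)),(b,f(b))] be the chord. Then for any point M ∈ 𝒞, the line through M orthogonal to 𝒞 intersects the graph arc { (t,f(t)) : a ≤ t ≤ b } in exactly one point. -/
/-!
Pair the graph point `(t, f t)` with the chord vector `(b - a, f b - f a)`; the orthogonal line
through `M` meets the arc exactly where this pairing equals the pairing of `M`. At `t = a` and
`t = b` the pairing brackets that of any chord point, which gives existence. By the mean value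
theorem the derivative of the pairing is `(b - a) (1 + f'(t) f'(c))` for a fixed `c`, and
`|f'(c)| |f'(t) - f'(c)| ≤ ‖f'‖_∞ ‖f''‖_∞ η < 1`, so the pairing is strictly increasing, which
gives uniqueness.
-/

noncomputable section
open Set

theorem le_sSup_image_of_isCompact {α : Type*} [TopologicalSpace α] {K : Set α} {g : α → ℝ}
    (hK : IsCompact K) (hg : ContinuousOn g K) {x : α} (hx : x ∈ K) : g x ≤ sSup (g '' K) :=
  le_csSup (hK.bddAbove_image hg) (mem_image_of_mem g hx)

theorem one_add_mul_pos_of_abs_le {x y K L : ℝ} (hx : |x| ≤ K) (hxy : |y - x| ≤ L)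
    (hKL : K * L < 1) : 0 < 1 + y * x := by
  have hsmall : |x * (y - x)| < 1 := by
    rw [abs_mul]
    exact (mul_le_mul hx hxy (abs_nonneg _) ((abs_nonneg x).trans hx)).trans_lt hKL
  -- `1 + y x = 1 + x² + x (y - x)`
  nlinarith [neg_abs_le (x * (y - x)), sq_nonneg x]

theorem StrictMonoOn.existsUnique_eq_of_mem_Icc {α δ : Type*}
    [ConditionallyCompleteLinearOrder α] [TopologicalSpace α] [OrderTopology α] [DenselyOrdered α]
    [LinearOrder δ] [TopologicalSpace δ] [OrderClosedTopology δ] {g : α → δ} {a b : α} {y : δ}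
    (hmono : StrictMonoOn g (Icc a b)) (hab : a ≤ b) (hg : ContinuousOn g (Icc a b))
    (hy : y ∈ Icc (g a) (g b)) : ∃! t, t ∈ Icc a b ∧ g t = y := by
  obtain ⟨t, ht, rfl⟩ := intermediate_value_Icc hab hg hy
  exact ⟨t, ⟨ht, rfl⟩, fun s hs => hmono.injOn hs.1 ht hs.2⟩

def chordCoord (f : ℝ → ℝ) (a b t : ℝ) : ℝ :=
  t * (b - a) + f t * (f b - f a)

section chordCoord

variable {f : ℝ → ℝ} {a b : ℝ}

theorem hasDerivAt_chordCoord {t : ℝ} (hf : DifferentiableAt ℝ f t) :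
    HasDerivAt (chordCoord f a b) ((b - a) + deriv f t * (f b - f a)) t := by
  show HasDerivAt (fun t => t * (b - a) + f t * (f b - f a)) _ t
  simpa only [one_mul] using
    ((hasDerivAt_id' t).mul_const (b - a)).fun_add (hf.hasDerivAt.mul_const (f b - f a))

theorem continuous_chordCoord (hf : Differentiable ℝ f) : Continuous (chordCoord f a b) :=
  continuous_iff_continuousAt.2 fun t => (hasDerivAt_chordCoord (hf t)).continuousAt

theorem chordCoord_mem_Icc_of_mem_segment (f : ℝ → ℝ) {M : ℝ × ℝ}
    (hM : M ∈ segment ℝ ((a, f a) : ℝ × ℝ) (b, f b)) :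
    M.1 * (b - a) + M.2 * (f b - f a) ∈ Icc (chordCoord f a b a) (chordCoord f a b b) := by
  obtain ⟨u, v, hu, hv, huv, rfl⟩ := hM
  obtain rfl : u = 1 - v := by linarith
  have hd : 0 ≤ (b - a) ^ 2 + (f b - f a) ^ 2 := by positivity
  simp only [chordCoord, Prod.fst_add, Prod.snd_add, Prod.smul_fst, Prod.smul_snd, smul_eq_mul]
  constructor <;> nlinarith [mul_nonneg hu hd, mul_nonneg hv hd]

theorem strictMonoOn_chordCoord {K L : ℝ} (hf : Differentiable ℝ f)
    (hf' : Differentiable ℝ (deriv f)) (hab : a < b) (hK : ∀ x ∈ Icc a b, |deriv f x| ≤ K)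
    (hL : ∀ x ∈ Icc a b, |deriv (deriv f) x| ≤ L) (hKL : K * (L * (b - a)) < 1) :
    StrictMonoOn (chordCoord f a b) (Icc a b) := by
  obtain ⟨c, hc, hslope⟩ := exists_deriv_eq_slope f hab hf.continuous.continuousOn
    hf.differentiableOn
  have hc' : c ∈ Icc a b := Ioo_subset_Icc_self hc
  have hchord : f b - f a = deriv f c * (b - a) := by
    rw [hslope]; field_simp [sub_ne_zero.2 hab.ne']
  refine strictMonoOn_of_deriv_pos (convex_Icc a b) (continuous_chordCoord hf).continuousOn
    fun t ht => ?_
  rw [interior_Icc] at ht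
  have hdist : |deriv f t - deriv f c| ≤ L * (b - a) := by
    have hL0 : 0 ≤ L := (abs_nonneg _).trans (hL c hc')
    have htc : |t - c| ≤ b - a :=
      abs_sub_le_iff.2 ⟨by linarith [ht.2, hc.1], by linarith [ht.1, hc.2]⟩
    calc |deriv f t - deriv f c| ≤ L * |t - c| :=
          (convex_Icc a b).norm_image_sub_le_of_norm_deriv_le (fun x _ => hf' x) hL hc'
            (Ioo_subset_Icc_self ht)
      _ ≤ L * (b - a) := mul_le_mul_of_nonneg_left htc hL0
  have hpos := one_add_mul_pos_of_abs_le (hK c hc') hdist hKL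
  rw [(hasDerivAt_chordCoord (hf t)).deriv, hchord]
  nlinarith [sub_pos.2 hab]

end chordCoord

theorem stmt9_general (η a b : ℝ) (f : ℝ → ℝ) (M1 M2 : ℝ)
    (hf : ContDiff ℝ 2 f)
    (hM1 : M1 = sSup ((fun x => |deriv f x|) '' Icc (0:ℝ) η))
    (hM2 : M2 = sSup ((fun x => |deriv (deriv f) x|) '' Icc (0:ℝ) η))
    (hη : η < 1 / (2 * M1 * M2))
    (ha : 0 ≤ a) (hab : a < b) (hb : b ≤ η) :
    ∀ M ∈ segment ℝ ((a, f a) : ℝ × ℝ) ((b, f b) : ℝ × ℝ),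
      ∃! t : ℝ, t ∈ Icc a b ∧
        (t - M.1) * (b - a) + (f t - M.2) * (f b - f a) = 0 := by
  intro M hM
  have hf' : ContDiff ℝ 1 (deriv f) := hf.deriv' (n := 1)
  have hfd : Differentiable ℝ f := hf.differentiable (by norm_num)
  have hsub : Icc a b ⊆ Icc 0 η := Icc_subset_Icc ha hb
  have hbound1 : ∀ x ∈ Icc 0 η, |deriv f x| ≤ M1 := fun x hx => hM1 ▸
    le_sSup_image_of_isCompact isCompact_Icc (hf.continuous_deriv one_le_two).abs.continuousOn hx
  have hbound2 : ∀ x ∈ Icc 0 η, |deriv (deriv f) x| ≤ M2 := fun x hx => hM2 ▸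
    le_sSup_image_of_isCompact isCompact_Icc (hf'.continuous_deriv le_rfl).abs.continuousOn hx
  have hsmall : M1 * (M2 * (b - a)) < 1 := by
    have hM1 : 0 ≤ M1 := (abs_nonneg _).trans (hbound1 a (hsub (left_mem_Icc.2 hab.le)))
    have hM2 : 0 ≤ M2 := (abs_nonneg _).trans (hbound2 a (hsub (left_mem_Icc.2 hab.le)))
    rcases (mul_nonneg hM1 hM2).eq_or_lt with h0 | hpos
    · rw [← mul_assoc, ← h0, zero_mul]; exact one_pos
    · have := (lt_div_iff₀ (by linarith)).mp hη
      nlinarith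
  have hmono := strictMonoOn_chordCoord hfd (hf'.differentiable one_ne_zero) hab
    (fun x hx => hbound1 x (hsub hx)) (fun x hx => hbound2 x (hsub hx)) hsmall
  refine (existsUnique_congr fun t => and_congr_right fun _ => ?_).2
    (hmono.existsUnique_eq_of_mem_Icc hab.le (continuous_chordCoord hfd).continuousOn
      (chordCoord_mem_Icc_of_mem_segment f hM))
  unfold chordCoord
  constructor <;> intro h <;> linarith

/-- if `η < 1/(2‖f'‖_∞‖f''‖_∞)`, then for `0 ≤ a < b ≤ η` and any point `M`
on the chord `𝒞 = [(a,f a),(b,f b)]`, the line through `M` orthogonal to `𝒞` meets the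
graph arc `{(t, f t) : a ≤ t ≤ b}` in exactly one point. -/
theorem stmt9 (η a b : ℝ) (f : ℝ → ℝ) (M1 M2 : ℝ)
    (hη0 : 0 < η)
    (hf : ContDiff ℝ 2 f)
    (hM1 : M1 = sSup ((fun x => |deriv f x|) '' Icc (0:ℝ) η))
    (hM2 : M2 = sSup ((fun x => |deriv (deriv f) x|) '' Icc (0:ℝ) η))
    (hη : η < 1 / (2 * M1 * M2))
    (ha : 0 ≤ a) (hab : a < b) (hb : b ≤ η) :
    ∀ M ∈ segment ℝ ((a, f a) : ℝ × ℝ) ((b, f b) : ℝ × ℝ),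
      ∃! t : ℝ, t ∈ Icc a b ∧
        (t - M.1) * (b - a) + (f t - M.2) * (f b - f a) = 0 :=
  stmt9_general η a b f M1 M2 hf hM1 hM2 hη ha hab hb
end
end

section
/- Let f ∈ C²([0,η],ℝ₊) be strictly concave and consider a sub-arc γ of the graph of f with chord 𝒞 of length δ. Suppose δ < min{1/2, 1/(16‖f''‖_∞²)}. Construct, as in the Cantor-type iteration, the two sub-arcs γ₁, γ₂ of γ whose chords 𝒞₁, 𝒞₂ are obtained by removing a centered segment of length δ² from 𝒞 and projecting orthogonally onto γ, and let T₁, T₂ be the right-angled triangles with legs 𝒞₁, 𝒞₂ and hypotenuses contained in 𝒞. Then each hypotenuse has length strictly less than δ/2; in particular T₁ and T₂ are disjoint. -/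
/-- Length of the hypotenuse, lying on the x-axis, of the right triangle with vertices `(0,0)`
and `(x,y)` and right angle at `(x,y)`. -/
noncomputable def rightTriangleHypotenuse (x y : ℝ) : ℝ := (1 + (y / x) ^ 2) * x

lemma rightTriangleHypotenuse_eq {x : ℝ} (y : ℝ) (hx : x ≠ 0) :
    rightTriangleHypotenuse x y = (x ^ 2 + y ^ 2) / x := by
  unfold rightTriangleHypotenuse
  field_simp

lemma rightTriangleHypotenuse_lt {x y c : ℝ} (hx : 0 < x) (h : x ^ 2 + y ^ 2 < c * x) :
    rightTriangleHypotenuse x y < c := by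
  rw [rightTriangleHypotenuse_eq y hx.ne', div_lt_iff₀ hx]
  exact h

lemma mul_lt_one_of_lt_one_div {a δ : ℝ} (ha : 0 ≤ a) (hδ : δ < 1 / a) : a * δ < 1 := by
  rcases ha.eq_or_lt with rfl | ha
  · norm_num
  · rw [mul_comm]
    exact (lt_div_iff₀ ha).mp hδ

/- With `x = (δ - δ²)/2` one has `x² - (δ/2) x = -δ³(1 - δ)/4`, while
`y² ≤ δ⁴M² < δ³/16 ≤ δ³(1 - δ)/4`. -/
lemma sq_add_sq_lt_half_mul {δ M y : ℝ} (hδ0 : 0 < δ) (hδ : δ < 1 / 2)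
    (hδM : 16 * M ^ 2 * δ < 1) (hy : |y| ≤ δ ^ 2 * M) :
    ((δ - δ ^ 2) / 2) ^ 2 + y ^ 2 < δ / 2 * ((δ - δ ^ 2) / 2) := by
  have hy_sq : y ^ 2 ≤ δ ^ 4 * M ^ 2 := by
    obtain ⟨hlo, hhi⟩ := abs_le.mp hy
    nlinarith [sq_le_sq' hlo hhi]
  have hδ3 : 0 < δ ^ 3 := by positivity
  nlinarith [mul_pos hδ3 (show (0 : ℝ) < 1 - 16 * M ^ 2 * δ by linarith),
    mul_pos hδ3 (show (0 : ℝ) < 1 / 2 - δ by linarith)]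

lemma rightTriangleHypotenuse_lt_half {δ M y : ℝ} (hδ0 : 0 < δ) (hδ : δ < 1 / 2)
    (hδM : 16 * M ^ 2 * δ < 1) (hy : |y| ≤ δ ^ 2 * M) :
    rightTriangleHypotenuse ((δ - δ ^ 2) / 2) y < δ / 2 :=
  rightTriangleHypotenuse_lt (by nlinarith) (sq_add_sq_lt_half_mul hδ0 hδ hδM hy)

theorem stmt10_general (δ M y₁ y₂ : ℝ)
    (hδ0 : 0 < δ) (hδ : δ < min (1 / 2) (1 / (16 * M ^ 2)))
    (hy₁0 : 0 < y₁) (hy₁ : y₁ ≤ δ ^ 2 * M)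
    (hy₂0 : 0 < y₂) (hy₂ : y₂ ≤ δ ^ 2 * M)
    (x₁ x₂ x₃ x₄ x₅ : ℝ)
    (hx₁ : x₁ = (δ - δ ^ 2) / 2) (hx₂ : x₂ = (δ + δ ^ 2) / 2) (hx₃ : x₃ = δ)
    (hx₄ : x₄ = (1 + (y₁ / x₁) ^ 2) * x₁)
    (hx₅ : x₅ = x₃ - (1 + (y₂ / (x₃ - x₂)) ^ 2) * (x₃ - x₂)) :
    x₄ < x₃ / 2 ∧ x₃ - x₅ < x₃ / 2 ∧ x₄ < x₅ := by
  have hδhalf : δ < 1 / 2 := hδ.trans_le (min_le_left _ _)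
  have hδM : 16 * M ^ 2 * δ < 1 :=
    mul_lt_one_of_lt_one_div (by positivity) (hδ.trans_le (min_le_right _ _))
  have hx₃₂ : x₃ - x₂ = (δ - δ ^ 2) / 2 := by rw [hx₃, hx₂]; ring
  have h₁ : x₄ < x₃ / 2 := by
    rw [hx₄, hx₁, hx₃]
    exact rightTriangleHypotenuse_lt_half hδ0 hδhalf hδM ((abs_of_pos hy₁0).trans_le hy₁)
  have h₂ : x₃ - x₅ < x₃ / 2 := by
    rw [hx₅, sub_sub_cancel, hx₃₂, hx₃]
    exact rightTriangleHypotenuse_lt_half hδ0 hδhalf hδM ((abs_of_pos hy₂0).trans_le hy₂)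
  exact ⟨h₁, h₂, by linarith⟩

/-- in the frame adapted to a chord `𝒞` of length `δ` of a strictly
concave arc (origin at one endpoint, x-axis along `𝒞`), with
`δ < min{1/2, 1/(16‖f''‖²_∞)}`, the endpoints of the two children sub-arcs project onto
the chord at abscissae `x₁ = (δ−δ²)/2` and `x₂ = (δ+δ²)/2`, with heights
`0 < y₁, y₂ ≤ δ²‖f''‖_∞`.  The triangles `T₁`, `T₂` are right-angled at `(x₁,y₁)` and
`(x₂,y₂)` with hypotenuses `[0,x₄]` and `[x₅,x₃]` on the x-axis, where
`x₄ = (1+(y₁/x₁)²)x₁` and `x₃ − x₅ = (1+(y₂/(x₃−x₂))²)(x₃−x₂)`.  Then each hypotenuse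
has length strictly less than `δ/2`; in particular `x₄ < x₅`, so `T₁` and `T₂` are
disjoint. -/
theorem stmt10 (δ M y₁ y₂ : ℝ) (hM : 0 ≤ M)
    (hδ0 : 0 < δ) (hδ : δ < min (1 / 2) (1 / (16 * M ^ 2)))
    (hy₁0 : 0 < y₁) (hy₁ : y₁ ≤ δ ^ 2 * M)
    (hy₂0 : 0 < y₂) (hy₂ : y₂ ≤ δ ^ 2 * M)
    (x₁ x₂ x₃ x₄ x₅ : ℝ)
    (hx₁ : x₁ = (δ - δ ^ 2) / 2) (hx₂ : x₂ = (δ + δ ^ 2) / 2) (hx₃ : x₃ = δ)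
    (hx₄ : x₄ = (1 + (y₁ / x₁) ^ 2) * x₁)
    (hx₅ : x₅ = x₃ - (1 + (y₂ / (x₃ - x₂)) ^ 2) * (x₃ - x₂)) :
    x₄ < x₃ / 2 ∧ x₃ - x₅ < x₃ / 2 ∧ x₄ < x₅ :=
  stmt10_general δ M y₁ y₂ hδ0 hδ hy₁0 hy₁ hy₂0 hy₂ x₁ x₂ x₃ x₄ x₅ hx₁ hx₂ hx₃ hx₄ hx₅
end

section
/- In the Cantor-type construction on a strictly concave C² arc satisfying the smallness hypothesis, the resulting compact set K = ⋂_{N≥0} closure(K_N) has positive one-dimensional Hausdorff measure: ℋ¹(K) > 0. -/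
/-!
Projecting to the first coordinate is `1`-Lipschitz, so it suffices that the projected Cantor set
`⋂ N, ⋃ k, [a N k, b N k]` has positive Lebesgue measure. By Rolle's theorem `f'` vanishes
somewhere in `[0, η]`, so `|f'| ≤ M2 η` there and `(M2 η)² ≤ 1/32`: every chord is nearly
horizontal. Hence each child interval has at most `33/62` of its parent's length `ℓ`, and the
removed gap has length at most `10/9 ℓ²`. The total length of generation `N + 1` is then at
least `1 - (10/9) η (33/62)ᴺ` times that of generation `N`, and these factors have a positive
infinite product.
-/

noncomputable section
open MeasureTheory Filter Set Topology Metric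
open scoped RealInnerProductSpace

/-- The Euclidean plane. -/
abbrev E2 : Type := EuclideanSpace ℝ (Fin 2)

/-- The graph map `t ↦ (t, f t)` into the Euclidean plane. -/
def graphMap (f : ℝ → ℝ) (t : ℝ) : E2 :=
  (EuclideanSpace.equiv (Fin 2) ℝ).symm ![t, f t]

lemma exists_eq_two_mul_or_eq_two_mul_add_one {N k : ℕ} (hk : k < 2 ^ (N + 1)) :
    ∃ j < 2 ^ N, k = 2 * j ∨ k = 2 * j + 1 := by
  obtain ⟨j, hj⟩ := Nat.even_or_odd' k
  exact ⟨j, by rw [pow_succ] at hk; omega, hj⟩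

lemma sum_range_two_mul {M : Type*} [AddCommMonoid M] (g : ℕ → M) (n : ℕ) :
    ∑ i ∈ Finset.range (2 * n), g i = ∑ k ∈ Finset.range n, (g (2 * k) + g (2 * k + 1)) := by
  induction n with
  | zero => simp
  | succ n ih =>
    rw [Nat.mul_succ, Finset.sum_range_succ, Finset.sum_range_succ, Finset.sum_range_succ, ih,
      add_assoc]

lemma exp_neg_div_le_one_sub {x c : ℝ} (hx : 0 ≤ x) (hxc : x ≤ c) (hc : c < 1) :
    Real.exp (-(x / (1 - c))) ≤ 1 - x := by
  have hx1 : 0 < 1 - x := by linarith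
  calc Real.exp (-(x / (1 - c))) ≤ Real.exp (-(x / (1 - x))) := by
        gcongr
    _ = (Real.exp (x / (1 - x)))⁻¹ := Real.exp_neg _
    _ ≤ (x / (1 - x) + 1)⁻¹ := by
        gcongr
        exact Real.add_one_le_exp _
    _ = 1 - x := by field_simp; ring

lemma le_pow_mul_of_le_mul_parent {ℓ : ℕ → ℕ → ℝ} {r : ℝ} (hr : 0 ≤ r)
    (hℓ : ∀ N, ∀ k < 2 ^ N, ℓ (N + 1) (2 * k) ≤ r * ℓ N k ∧ ℓ (N + 1) (2 * k + 1) ≤ r * ℓ N k) :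
    ∀ N, ∀ k < 2 ^ N, ℓ N k ≤ r ^ N * ℓ 0 0
  | 0, k, hk => by simp_all
  | N + 1, k, hk => by
    obtain ⟨j, hj, hkj⟩ := exists_eq_two_mul_or_eq_two_mul_add_one hk
    have hchild : ℓ (N + 1) k ≤ r * ℓ N j := by
      rcases hkj with rfl | rfl
      exacts [(hℓ N j hj).1, (hℓ N j hj).2]
    calc ℓ (N + 1) k ≤ r * ℓ N j := hchild
      _ ≤ r * (r ^ N * ℓ 0 0) := by gcongr; exact le_pow_mul_of_le_mul_parent hr hℓ N j hj
      _ = r ^ (N + 1) * ℓ 0 0 := by ring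

lemma exp_mul_le_of_one_sub_mul_le_succ {T : ℕ → ℝ} {c r : ℝ} (hc : 0 ≤ c) (hc1 : c < 1)
    (hr : 0 ≤ r) (hr1 : r < 1) (hT0 : 0 ≤ T 0)
    (hstep : ∀ N, (1 - c * r ^ N) * T N ≤ T (N + 1)) (N : ℕ) :
    Real.exp (-(c / (1 - c) / (1 - r))) * T 0 ≤ T N := by
  have hrN : ∀ N, c * r ^ N ≤ c := fun N => mul_le_of_le_one_right hc (pow_le_one₀ hr hr1.le)
  have hpartial : ∀ N, Real.exp (-(c / (1 - c) * ∑ j ∈ Finset.range N, r ^ j)) * T 0 ≤ T N := by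
    intro N
    induction N with
    | zero => simp
    | succ N ih =>
      calc Real.exp (-(c / (1 - c) * ∑ j ∈ Finset.range (N + 1), r ^ j)) * T 0
          = Real.exp (-(c * r ^ N / (1 - c))) *
              (Real.exp (-(c / (1 - c) * ∑ j ∈ Finset.range N, r ^ j)) * T 0) := by
            rw [Finset.sum_range_succ, ← mul_assoc, ← Real.exp_add]; ring_nf
        _ ≤ (1 - c * r ^ N) * T N :=
            mul_le_mul (exp_neg_div_le_one_sub (by positivity) (hrN N) hc1) ih
              (mul_nonneg (Real.exp_pos _).le hT0)
              (by linarith [hrN N])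
        _ ≤ T (N + 1) := hstep N
  have hgeom : ∑ j ∈ Finset.range N, r ^ j ≤ 1 / (1 - r) := by
    simpa [← Finset.range_eq_Ico] using geom_sum_Ico_le_of_lt_one (m := 0) (n := N) hr hr1
  refine le_trans (mul_le_mul_of_nonneg_right ?_ hT0) (hpartial N)
  have h1c : 0 < 1 - c := by linarith
  gcongr
  calc c / (1 - c) * ∑ j ∈ Finset.range N, r ^ j ≤ c / (1 - c) * (1 / (1 - r)) := by gcongr
    _ = c / (1 - c) / (1 - r) := by ring

structure IsDyadicSplitting (a b : ℕ → ℕ → ℝ) : Prop where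
  lt : ∀ N, ∀ k < 2 ^ N, a N k < b N k
  left : ∀ N, ∀ k < 2 ^ N, a (N + 1) (2 * k) = a N k
  right : ∀ N, ∀ k < 2 ^ N, b (N + 1) (2 * k + 1) = b N k
  gap : ∀ N, ∀ k < 2 ^ N, b (N + 1) (2 * k) < a (N + 1) (2 * k + 1)

def dyadicUnion (a b : ℕ → ℕ → ℝ) (N : ℕ) : Set ℝ :=
  ⋃ k ∈ Finset.range (2 ^ N), Icc (a N k) (b N k)

lemma Icc_subset_dyadicUnion {a b : ℕ → ℕ → ℝ} {N k : ℕ} (hk : k < 2 ^ N) :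
    Icc (a N k) (b N k) ⊆ dyadicUnion a b N :=
  subset_iUnion₂_of_subset k (Finset.mem_range.2 hk) subset_rfl

lemma measurableSet_dyadicUnion (a b : ℕ → ℕ → ℝ) (N : ℕ) : MeasurableSet (dyadicUnion a b N) :=
  Finset.measurableSet_biUnion _ fun _ _ => measurableSet_Icc

namespace IsDyadicSplitting

variable {a b : ℕ → ℕ → ℝ}

lemma b_lt_a_succ (h : IsDyadicSplitting a b) : ∀ {N k : ℕ}, k + 1 < 2 ^ N → b N k < a N (k + 1)
  | 0, _, hk => by simp at hk
  | N + 1, k, hk => by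
    obtain ⟨j, hj, rfl | rfl⟩ :=
      exists_eq_two_mul_or_eq_two_mul_add_one (N := N) (k := k) (by omega)
    · exact h.gap N j hj
    · have hj1 : j + 1 < 2 ^ N := by rw [pow_succ] at hk; omega
      rw [h.right N j hj, show 2 * j + 1 + 1 = 2 * (j + 1) by ring, h.left N (j + 1) hj1]
      exact h.b_lt_a_succ hj1

lemma b_lt_a_of_lt (h : IsDyadicSplitting a b) {N i j : ℕ} (hij : i < j) (hj : j < 2 ^ N) :
    b N i < a N j := by
  induction j, hij using Nat.le_induction with
  | base => exact h.b_lt_a_succ hj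
  | succ j hij ih =>
    exact (ih (by omega)).trans ((h.lt N j (by omega)).trans (h.b_lt_a_succ hj))

lemma pairwiseDisjoint_Icc (h : IsDyadicSplitting a b) (N : ℕ) :
    (Finset.range (2 ^ N) : Set ℕ).PairwiseDisjoint fun k => Icc (a N k) (b N k) := by
  intro i hi j hj hij
  simp only [Finset.coe_range, mem_Iio] at hi hj
  rw [Function.onFun, disjoint_left]
  rintro x ⟨hxi, hxi'⟩ ⟨hxj, hxj'⟩
  rcases hij.lt_or_gt with hij | hij
  · linarith [h.b_lt_a_of_lt hij hj]
  · linarith [h.b_lt_a_of_lt hij hi]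

lemma volume_dyadicUnion (h : IsDyadicSplitting a b) (N : ℕ) :
    volume (dyadicUnion a b N) = ENNReal.ofReal (∑ k ∈ Finset.range (2 ^ N), (b N k - a N k)) := by
  rw [dyadicUnion, measure_biUnion_finset (h.pairwiseDisjoint_Icc N) fun _ _ => measurableSet_Icc,
    ENNReal.ofReal_sum_of_nonneg fun k hk => (sub_pos.2 (h.lt N k (Finset.mem_range.1 hk))).le]
  simp only [Real.volume_Icc]

lemma dyadicUnion_succ_subset (h : IsDyadicSplitting a b) (N : ℕ) :
    dyadicUnion a b (N + 1) ⊆ dyadicUnion a b N := by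
  refine iUnion₂_subset fun k hk => ?_
  obtain ⟨j, hj, rfl | rfl⟩ := exists_eq_two_mul_or_eq_two_mul_add_one (Finset.mem_range.1 hk)
  · refine (Icc_subset_Icc (h.left N j hj).ge ?_).trans (Icc_subset_dyadicUnion hj)
    linarith [h.gap N j hj, h.lt (N + 1) (2 * j + 1) (by rw [pow_succ]; omega), h.right N j hj]
  · refine (Icc_subset_Icc ?_ (h.right N j hj).le).trans (Icc_subset_dyadicUnion hj)
    linarith [h.gap N j hj, h.lt (N + 1) (2 * j) (by rw [pow_succ]; omega), h.left N j hj]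

lemma antitone_dyadicUnion (h : IsDyadicSplitting a b) : Antitone (dyadicUnion a b) :=
  antitone_nat_of_succ_le h.dyadicUnion_succ_subset

lemma Icc_subset_Icc_zero (h : IsDyadicSplitting a b) {N k : ℕ} (hk : k < 2 ^ N) :
    Icc (a N k) (b N k) ⊆ Icc (a 0 0) (b 0 0) := by
  simpa [dyadicUnion] using
    (Icc_subset_dyadicUnion hk).trans (h.antitone_dyadicUnion (Nat.zero_le N))

lemma sum_length_succ (h : IsDyadicSplitting a b) (N : ℕ) :
    ∑ k ∈ Finset.range (2 ^ (N + 1)), (b (N + 1) k - a (N + 1) k) =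
      ∑ k ∈ Finset.range (2 ^ N),
        ((b N k - a N k) - (a (N + 1) (2 * k + 1) - b (N + 1) (2 * k))) := by
  rw [pow_succ, mul_comm, sum_range_two_mul]
  refine Finset.sum_congr rfl fun k hk => ?_
  rw [h.left N k (Finset.mem_range.1 hk), h.right N k (Finset.mem_range.1 hk)]
  ring

/-- Since the gaps are at most `C ℓ₀ rᴺ` times their parent's length, the total length of
generation `N + 1` is at least `1 - C ℓ₀ rᴺ` times that of generation `N`, and these factors
have a positive infinite product. -/
theorem volume_iInter_dyadicUnion_pos (h : IsDyadicSplitting a b) {r C : ℝ} (hr : 0 ≤ r)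
    (hr1 : r < 1) (hC : 0 ≤ C) (hC1 : C * (b 0 0 - a 0 0) < 1)
    (hbounds : ∀ N, ∀ k < 2 ^ N,
      b (N + 1) (2 * k) - a N k ≤ r * (b N k - a N k) ∧
      b N k - a (N + 1) (2 * k + 1) ≤ r * (b N k - a N k) ∧
      a (N + 1) (2 * k + 1) - b (N + 1) (2 * k) ≤ C * (b N k - a N k) ^ 2) :
    0 < volume (⋂ N, dyadicUnion a b N) := by
  set T : ℕ → ℝ := fun N => ∑ k ∈ Finset.range (2 ^ N), (b N k - a N k) with hT
  have hlen : ∀ N, ∀ k < 2 ^ N, b N k - a N k ≤ r ^ N * (b 0 0 - a 0 0) :=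
    le_pow_mul_of_le_mul_parent (ℓ := fun N k => b N k - a N k) hr fun N k hk => by
      simp only [h.left N k hk, h.right N k hk]
      exact ⟨(hbounds N k hk).1, (hbounds N k hk).2.1⟩
  have hstep : ∀ N, (1 - C * (b 0 0 - a 0 0) * r ^ N) * T N ≤ T (N + 1) := by
    intro N
    simp only [hT]
    rw [h.sum_length_succ, Finset.mul_sum]
    refine Finset.sum_le_sum fun k hk => ?_
    have hk := Finset.mem_range.1 hk
    have hgap : a (N + 1) (2 * k + 1) - b (N + 1) (2 * k) ≤
        C * (b 0 0 - a 0 0) * r ^ N * (b N k - a N k) :=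
      calc _ ≤ C * (b N k - a N k) ^ 2 := (hbounds N k hk).2.2
        _ = C * (b N k - a N k) * (b N k - a N k) := by ring
        _ ≤ C * (r ^ N * (b 0 0 - a 0 0)) * (b N k - a N k) :=
          mul_le_mul_of_nonneg_right (mul_le_mul_of_nonneg_left (hlen N k hk) hC)
            (sub_nonneg.2 (h.lt N k hk).le)
        _ = _ := by ring
    linarith
  have hT0 : 0 < T 0 := by simpa [hT] using h.lt 0 0 one_pos
  have hlower := exp_mul_le_of_one_sub_mul_le_succ
    (mul_nonneg hC (sub_pos.2 (h.lt 0 0 one_pos)).le) hC1 hr hr1 hT0.le hstep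
  rw [h.antitone_dyadicUnion.measure_iInter
    (fun N => (measurableSet_dyadicUnion a b N).nullMeasurableSet)
    ⟨0, by rw [h.volume_dyadicUnion]; exact ENNReal.ofReal_ne_top⟩]
  refine lt_of_lt_of_le ?_ (le_iInf fun N =>
    (h.volume_dyadicUnion N).ge.trans' (ENNReal.ofReal_le_ofReal (hlower N)))
  exact ENNReal.ofReal_pos.2 (mul_pos (Real.exp_pos _) hT0)

end IsDyadicSplitting

lemma inner_graphMap_sub_graphMap (f : ℝ → ℝ) (u v s t : ℝ) :
    ⟪graphMap f u - graphMap f v, graphMap f s - graphMap f t⟫ =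
      (u - v) * (s - t) + (f u - f v) * (f s - f t) := by
  simp only [graphMap, PiLp.continuousLinearEquiv_symm_apply, PiLp.inner_apply, PiLp.sub_apply,
    RCLike.inner_apply, Real.ringHom_apply, Fin.sum_univ_two, Fin.isValue, Matrix.cons_val_zero,
    Matrix.cons_val_one, Matrix.cons_val_fin_one]
  ring

lemma dist_graphMap_sq (f : ℝ → ℝ) (u v : ℝ) :
    dist (graphMap f u) (graphMap f v) ^ 2 = (u - v) ^ 2 + (f u - f v) ^ 2 := by
  rw [dist_eq_norm, ← real_inner_self_eq_norm_sq, inner_graphMap_sub_graphMap]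
  ring

lemma inner_sub_eq_of_inner_sub_add_smul_eq_zero {V : Type*} [NormedAddCommGroup V]
    [InnerProductSpace ℝ V] {X Y P : V} {s L : ℝ} (hL : dist X Y = L)
    (h : ⟪P - (X + (s / 2 / L) • (Y - X)), Y - X⟫ = 0) :
    ⟪P - X, Y - X⟫ = s * L / 2 := by
  rw [show P - (X + (s / 2 / L) • (Y - X)) = (P - X) - (s / 2 / L) • (Y - X) by abel,
    inner_sub_left, real_inner_smul_left, real_inner_self_eq_norm_sq, ← dist_eq_norm,
    dist_comm, hL] at h
  field_simp at h
  linarith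

section ChordCoordinates

/-! Coordinates relative to a chord with horizontal length `p` and vertical rise `v`, of an arc
with slopes at most `m`; `(x, d)` is the offset of a point of the arc from the chord's start.
The constants come from `m² ≤ 1/32`: `33/62 = (1 + 1/32) / (2 (1 - 1/32))` and
`10/9 ≥ (1 + 1/32)² / (1 - 1/32)`. -/

variable {p v x d m L : ℝ}

lemma mul_one_sub_sq_le_add (hv : |v| ≤ m * p) (hd : |d| ≤ m * x) :
    x * p * (1 - m ^ 2) ≤ x * p + d * v := by
  have : |d * v| ≤ m * x * (m * p) := by
    rw [abs_mul]
    exact mul_le_mul hd hv (abs_nonneg v) ((abs_nonneg d).trans hd)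
  nlinarith [neg_abs_le (d * v)]

lemma sq_add_sq_le (hv : |v| ≤ m * p) : p ^ 2 + v ^ 2 ≤ (1 + m ^ 2) * p ^ 2 := by
  have : v ^ 2 ≤ (m * p) ^ 2 := by
    rw [← sq_abs]
    exact pow_le_pow_left₀ (abs_nonneg v) hv 2
  nlinarith

lemma le_of_add_mul_eq_sub_sq_mul (hp : 0 < p) (hL0 : 0 ≤ L) (hL : L ^ 2 = p ^ 2 + v ^ 2)
    (hm : m ^ 2 ≤ 1 / 32) (hv : |v| ≤ m * p) (hx : 0 ≤ x) (hd : |d| ≤ m * x)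
    (h : x * p + d * v = (L - L ^ 2) * L / 2) :
    x ≤ 33 / 62 * p := by
  have hxp : x * (1 - m ^ 2) * p ≤ (1 + m ^ 2) * p / 2 * p := by
    nlinarith [mul_one_sub_sq_le_add hv hd, sq_add_sq_le hv, pow_nonneg hL0 3]
  have := le_of_mul_le_mul_right hxp hp
  nlinarith [mul_le_mul_of_nonneg_left hm hx, mul_le_mul_of_nonneg_left hm hp.le]

lemma le_of_add_mul_eq_cube (hp : 0 < p) (hL0 : 0 ≤ L) (hL : L ^ 2 = p ^ 2 + v ^ 2)
    (hm : m ^ 2 ≤ 1 / 32) (hv : |v| ≤ m * p) (hx : 0 ≤ x) (hd : |d| ≤ m * x)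
    (h : x * p + d * v = L ^ 2 * L) :
    x ≤ 10 / 9 * p ^ 2 := by
  have hL2 : L ^ 2 ≤ (1 + m ^ 2) * p ^ 2 := hL ▸ sq_add_sq_le hv
  have hL1 : L ≤ (1 + m ^ 2) * p := by
    refine (pow_le_pow_iff_left₀ hL0 (by positivity) two_ne_zero).1 (hL2.trans ?_)
    nlinarith [sq_nonneg m, sq_nonneg p]
  have hxp : x * (1 - m ^ 2) * p ≤ (1 + m ^ 2) ^ 2 * p ^ 2 * p := by
    calc x * (1 - m ^ 2) * p ≤ L ^ 2 * L := h ▸ by linarith [mul_one_sub_sq_le_add hv hd]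
      _ ≤ (1 + m ^ 2) * p ^ 2 * ((1 + m ^ 2) * p) := mul_le_mul hL2 hL1 hL0 (by positivity)
      _ = _ := by ring
  have := le_of_mul_le_mul_right hxp hp
  have hm' : (1 + m ^ 2) ^ 2 * p ^ 2 ≤ (33 / 32) ^ 2 * p ^ 2 := by gcongr; linarith
  nlinarith [mul_le_mul_of_nonneg_left hm hx]

end ChordCoordinates

lemma arc_split_bounds {f : ℝ → ℝ} {m A B q₁ q₂ L : ℝ} (hm : m ^ 2 ≤ 1 / 32)
    (hf : ∀ x ∈ Icc A B, ∀ y ∈ Icc A B, |f x - f y| ≤ m * |x - y|)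
    (hAq : A < q₁) (hq : q₁ < q₂) (hqB : q₂ < B)
    (hL : dist (graphMap f A) (graphMap f B) = L)
    (h₁ : ⟪graphMap f q₁ - (graphMap f A + ((L - L ^ 2) / 2 / L) •
      (graphMap f B - graphMap f A)), graphMap f B - graphMap f A⟫ = 0)
    (h₂ : ⟪graphMap f q₂ - (graphMap f A + ((L + L ^ 2) / 2 / L) •
      (graphMap f B - graphMap f A)), graphMap f B - graphMap f A⟫ = 0) :
    q₁ - A ≤ 33 / 62 * (B - A) ∧ B - q₂ ≤ 33 / 62 * (B - A) ∧ q₂ - q₁ ≤ 10 / 9 * (B - A) ^ 2 := by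
  have hL0 : 0 ≤ L := hL ▸ dist_nonneg
  have hL2 : L ^ 2 = (B - A) ^ 2 + (f B - f A) ^ 2 := by rw [← hL, dist_comm, dist_graphMap_sq]
  have e₁ := inner_sub_eq_of_inner_sub_add_smul_eq_zero hL h₁
  have e₂ := inner_sub_eq_of_inner_sub_add_smul_eq_zero hL h₂
  rw [inner_graphMap_sub_graphMap] at e₁ e₂
  have lip : ∀ {x y}, A ≤ y → y ≤ x → x ≤ B → |f x - f y| ≤ m * (x - y) := fun hy hyx hx => by
    simpa [abs_of_nonneg (sub_nonneg.2 hyx)] using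
      hf _ ⟨hy.trans hyx, hx⟩ _ ⟨hy, hyx.trans hx⟩
  have hv := lip le_rfl (by linarith) le_rfl
  refine ⟨?_, ?_, ?_⟩
  · exact le_of_add_mul_eq_sub_sq_mul (by linarith) hL0 hL2 hm hv (by linarith)
      (lip le_rfl hAq.le (by linarith)) (by linarith)
  · refine le_of_add_mul_eq_sub_sq_mul (d := f B - f q₂) (by linarith) hL0 hL2 hm hv
      (by linarith) ?_ (by linear_combination -hL2 - e₂)
    exact lip (by linarith) hqB.le le_rfl
  · exact le_of_add_mul_eq_cube (d := f q₂ - f q₁) (by linarith) hL0 hL2 hm hv (by linarith)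
      (lip hAq.le hq.le hqB.le) (by linear_combination e₂ - e₁)

lemma abs_sub_le_of_abs_deriv_le {g : ℝ → ℝ} {α β M x y : ℝ} (hg : Differentiable ℝ g)
    (hM : ∀ z ∈ Icc α β, |deriv g z| ≤ M) (hx : x ∈ Icc α β) (hy : y ∈ Icc α β) :
    |g x - g y| ≤ M * |x - y| :=
  (convex_Icc α β).norm_image_sub_le_of_norm_deriv_le (fun z _ => hg z) hM hy hx

lemma abs_sub_le_of_eq_of_abs_deriv_deriv_le {f : ℝ → ℝ} {α β M x y : ℝ} (hf : ContDiff ℝ 2 f)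
    (hαβ : α < β) (hfαβ : f α = f β) (hM : ∀ z ∈ Icc α β, |deriv (deriv f) z| ≤ M)
    (hx : x ∈ Icc α β) (hy : y ∈ Icc α β) :
    |f x - f y| ≤ M * (β - α) * |x - y| := by
  obtain ⟨c, hc, hfc⟩ := exists_deriv_eq_zero hαβ hf.continuous.continuousOn hfαβ
  have hM0 : 0 ≤ M := (abs_nonneg _).trans (hM α ⟨le_rfl, hαβ.le⟩)
  refine abs_sub_le_of_abs_deriv_le (hf.differentiable (by norm_num)) (fun z hz => ?_) hx hy
  calc |deriv f z| = |deriv f z - deriv f c| := by rw [hfc, sub_zero]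
    _ ≤ M * |z - c| :=
      abs_sub_le_of_abs_deriv_le ((hf.deriv' (n := 1)).differentiable one_ne_zero) hM hz
        (Ioo_subset_Icc_self hc)
    _ ≤ M * (β - α) := by
      gcongr
      exact abs_sub_le_iff.2 ⟨by linarith [hz.2, hc.1], by linarith [hz.1, hc.2]⟩

lemma abs_le_sSup_image_abs_s13 {g : ℝ → ℝ} (hg : Continuous g) {α β x : ℝ} (hx : x ∈ Icc α β) :
    |g x| ≤ sSup ((fun z => |g z|) '' Icc α β) :=
  le_csSup (isCompact_Icc.image (continuous_abs.comp hg)).bddAbove (mem_image_of_mem _ hx)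

lemma sq_mul_le_of_lt_of_lt {M η : ℝ} (hη : 0 < η) (h₁ : η < 1 / 2) (h₂ : η < 1 / (16 * M ^ 2)) :
    (M * η) ^ 2 ≤ 1 / 32 := by
  rcases eq_or_ne M 0 with rfl | hM
  · norm_num
  · have : M ^ 2 * η < 1 / 16 := by
      rw [lt_div_iff₀ (by positivity)] at h₂
      linarith
    nlinarith

lemma volume_le_hausdorffMeasure_of_subset_image {X : Type*} [EMetricSpace X] [MeasurableSpace X]
    [BorelSpace X] {g : X → ℝ} (hg : LipschitzWith 1 g) {S : Set ℝ} {K : Set X}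
    (hS : S ⊆ g '' K) : volume S ≤ μH[1] K :=
  calc volume S ≤ μH[1] (g '' K) := by
        rw [hausdorffMeasure_real]
        exact measure_mono hS
    _ ≤ μH[1] K := by simpa using hg.hausdorffMeasure_image_le zero_le_one K

/-- The generation-`N` arcs are the graphs of `f` over `[a N k, b N k]`, `k < 2^N`; `hproj₁` and
`hproj₂` put the inner endpoints of the two children over the ends of the centered sub-chord of
length `ℓ²` of their parent's chord. -/
theorem stmt13_general (η : ℝ) (f : ℝ → ℝ) (M1 M2 : ℝ)
    (hη0 : 0 < η) (hf : ContDiff ℝ 2 f)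
    (hf0 : f 0 = 0) (hfη : f η = 0)
    (hM2 : M2 = sSup ((fun x => |deriv (deriv f) x|) '' Icc (0:ℝ) η))
    (hsmall : η < min (1 / 2) (min (1 / (16 * M2 ^ 2)) (1 / (2 * M1 * M2))))
    (a b : ℕ → ℕ → ℝ)
    (ha00 : a 0 0 = 0) (hb00 : b 0 0 = η)
    (horder : ∀ N : ℕ, ∀ k < 2 ^ N, a N k < b N k)
    (hleft : ∀ N : ℕ, ∀ k < 2 ^ N, a (N + 1) (2 * k) = a N k)
    (hright : ∀ N : ℕ, ∀ k < 2 ^ N, b (N + 1) (2 * k + 1) = b N k)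
    (hgap : ∀ N : ℕ, ∀ k < 2 ^ N, b (N + 1) (2 * k) < a (N + 1) (2 * k + 1))
    (hproj₁ : ∀ N : ℕ, ∀ k < 2 ^ N,
      a N k < b (N + 1) (2 * k) ∧
      ⟪graphMap f (b (N + 1) (2 * k)) -
          (graphMap f (a N k) +
            ((dist (graphMap f (a N k)) (graphMap f (b N k)) -
              dist (graphMap f (a N k)) (graphMap f (b N k)) ^ 2) / 2 /
              dist (graphMap f (a N k)) (graphMap f (b N k))) •
            (graphMap f (b N k) - graphMap f (a N k))),
        graphMap f (b N k) - graphMap f (a N k)⟫ = 0)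
    (hproj₂ : ∀ N : ℕ, ∀ k < 2 ^ N,
      a (N + 1) (2 * k + 1) < b N k ∧
      ⟪graphMap f (a (N + 1) (2 * k + 1)) -
          (graphMap f (a N k) +
            ((dist (graphMap f (a N k)) (graphMap f (b N k)) +
              dist (graphMap f (a N k)) (graphMap f (b N k)) ^ 2) / 2 /
              dist (graphMap f (a N k)) (graphMap f (b N k))) •
            (graphMap f (b N k) - graphMap f (a N k))),
        graphMap f (b N k) - graphMap f (a N k)⟫ = 0) :
    0 < μH[1] (⋂ N : ℕ, closure
      (⋃ k ∈ Finset.range (2 ^ N), graphMap f '' Icc (a N k) (b N k))) := by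
  have hdyadic : IsDyadicSplitting a b := ⟨horder, hleft, hright, hgap⟩
  have hslope : ∀ x ∈ Icc 0 η, ∀ y ∈ Icc 0 η, |f x - f y| ≤ M2 * η * |x - y| := by
    intro x hx y hy
    simpa using abs_sub_le_of_eq_of_abs_deriv_deriv_le hf hη0 (hf0.trans hfη.symm)
      (fun z hz => hM2 ▸ abs_le_sSup_image_abs_s13 ((hf.deriv' (n := 1)).continuous_deriv le_rfl) hz)
      hx hy
  obtain ⟨hη2, hη16, -⟩ : η < 1 / 2 ∧ η < 1 / (16 * M2 ^ 2) ∧ _ := by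
    simpa only [lt_min_iff] using hsmall
  have hbounds (N k : ℕ) (hk : k < 2 ^ N) := by
    have hsub : Icc (a N k) (b N k) ⊆ Icc 0 η := ha00 ▸ hb00 ▸ hdyadic.Icc_subset_Icc_zero hk
    exact arc_split_bounds (sq_mul_le_of_lt_of_lt hη0 hη2 hη16)
      (fun x hx y hy => hslope x (hsub hx) y (hsub hy)) (hproj₁ N k hk).1 (hgap N k hk)
      (hproj₂ N k hk).1 rfl (hproj₁ N k hk).2 (hproj₂ N k hk).2
  refine (hdyadic.volume_iInter_dyadicUnion_pos (by norm_num) (by norm_num) (by norm_num)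
    (by rw [ha00, hb00]; linarith) hbounds).trans_le
    (volume_le_hausdorffMeasure_of_subset_image
      (LipschitzWith.of_edist_le fun p q => PiLp.edist_apply_le p q 0) fun x hx => ?_)
  refine ⟨graphMap f x, mem_iInter.2 fun N => subset_closure ?_, rfl⟩
  obtain ⟨k, hk, hxk⟩ := mem_iUnion₂.1 (mem_iInter.1 hx N)
  exact mem_iUnion₂.2 ⟨k, hk, mem_image_of_mem _ hxk⟩

/-- the Cantor-type set `K = ⋂_N closure(K_N)` built on a strictly
concave `C²` arc (the graph of `f` over `[0,η]`, chord on the x-axis) satisfying the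
smallness hypotheses has positive one-dimensional Hausdorff measure.

The generation-`N` arcs are the graphs of `f` over `[a N k, b N k]`, `k < 2^N`; each
arc with chord from `A = (a,f a)` to `B = (b,f b)` of length `ℓ` produces two children
keeping the endpoints `A`, `B`, the two new endpoints being the points of the arc lying
on the lines orthogonal to the chord through the two points of the chord at distance
`(ℓ−ℓ²)/2` and `(ℓ+ℓ²)/2` from `A` (i.e. the endpoints of the removed centered
sub-chord of length `ℓ²`). -/
theorem stmt13 (η : ℝ) (f : ℝ → ℝ) (M1 M2 : ℝ)
    (hη0 : 0 < η) (hf : ContDiff ℝ 2 f)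
    (hf0 : f 0 = 0) (hfη : f η = 0)
    (hfpos : ∀ x ∈ Ioo (0:ℝ) η, 0 < f x)
    (hconc : ∀ x ∈ Icc (0:ℝ) η, deriv (deriv f) x < 0)
    (hM1 : M1 = sSup ((fun x => |deriv f x|) '' Icc (0:ℝ) η))
    (hM2 : M2 = sSup ((fun x => |deriv (deriv f) x|) '' Icc (0:ℝ) η))
    (hsmall : η < min (1 / 2) (min (1 / (16 * M2 ^ 2)) (1 / (2 * M1 * M2))))
    (hdiam : 1 + 4 * M2 ^ 2 *
        diam {p : E2 | 0 ≤ p 0 ∧ p 0 ≤ η ∧ 0 ≤ p 1 ∧ p 1 ≤ f (p 0)} < 16 / 9)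
    (a b : ℕ → ℕ → ℝ)
    (ha00 : a 0 0 = 0) (hb00 : b 0 0 = η)
    (horder : ∀ N : ℕ, ∀ k < 2 ^ N, a N k < b N k)
    (hleft : ∀ N : ℕ, ∀ k < 2 ^ N, a (N + 1) (2 * k) = a N k)
    (hright : ∀ N : ℕ, ∀ k < 2 ^ N, b (N + 1) (2 * k + 1) = b N k)
    (hgap : ∀ N : ℕ, ∀ k < 2 ^ N, b (N + 1) (2 * k) < a (N + 1) (2 * k + 1))
    (hproj₁ : ∀ N : ℕ, ∀ k < 2 ^ N,
      a N k < b (N + 1) (2 * k) ∧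
      ⟪graphMap f (b (N + 1) (2 * k)) -
          (graphMap f (a N k) +
            ((dist (graphMap f (a N k)) (graphMap f (b N k)) -
              dist (graphMap f (a N k)) (graphMap f (b N k)) ^ 2) / 2 /
              dist (graphMap f (a N k)) (graphMap f (b N k))) •
            (graphMap f (b N k) - graphMap f (a N k))),
        graphMap f (b N k) - graphMap f (a N k)⟫ = 0)
    (hproj₂ : ∀ N : ℕ, ∀ k < 2 ^ N,
      a (N + 1) (2 * k + 1) < b N k ∧
      ⟪graphMap f (a (N + 1) (2 * k + 1)) -
          (graphMap f (a N k) +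
            ((dist (graphMap f (a N k)) (graphMap f (b N k)) +
              dist (graphMap f (a N k)) (graphMap f (b N k)) ^ 2) / 2 /
              dist (graphMap f (a N k)) (graphMap f (b N k))) •
            (graphMap f (b N k) - graphMap f (a N k))),
        graphMap f (b N k) - graphMap f (a N k)⟫ = 0) :
    0 < μH[1] (⋂ N : ℕ, closure
      (⋃ k ∈ Finset.range (2 ^ N), graphMap f '' Icc (a N k) (b N k))) :=
  stmt13_general η f M1 M2 hη0 hf hf0 hfη hM2 hsmall a b ha00 hb00 horder hleft hright hgap hproj₁
    hproj₂
end
end
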